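/- arXiv:2505.10341 — 3 statements merged into one kernel-verified Lean document; each statement's English description precedes it below -/
import Mathlib

section
/- Let p be an odd prime, n ≥ 2 an integer, and a, b integers with gcd(ab, p) = 1. If ab is a quadratic nonresidue modulo p, then Kl(a, b; p^n) = 0. -/
/-!
Write `x` modulo `p ^ n` as `y + p ^ (n - 1) * z` with `y` modulo `p ^ (n - 1)` and `z` modulo
`p`. Since `(p ^ (n - 1)) ^ 2 ≡ 0 [MOD p ^ n]`, the inverse is `x̄ ≡ ȳ - p ^ (n - 1) * z * ȳ ^ 2`,
so the phase `a x̄ + b x` is `(a ȳ + b y) + p ^ (n - 1) * (b - a ȳ ^ 2) * z`. The sum over `z` is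
then a complete additive character sum modulo `p`, which vanishes unless `b ≡ a ȳ ^ 2 [ZMOD p]`;
but that congruence would make `a b ≡ (a ȳ) ^ 2` a square modulo `p`.
-/

/-- `e_q(t) = exp(2πi t / q)`. -/
noncomputable def eI (q : ℕ) (t : ℤ) : ℂ :=
  Complex.exp (2 * Real.pi * Complex.I * (t : ℂ) / (q : ℂ))

/-- The Kloosterman sum `Kl(a,b;q) = ∑_{x mod q, (x,q)=1} e_q(a x̄ + b x)`. -/
noncomputable def Kl (a b : ℤ) (q : ℕ) : ℂ :=
  ∑ x ∈ Finset.range q, if Nat.gcd x q = 1 then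
    eI q (a * (((x : ZMod q)⁻¹).val : ℤ) + b * (x : ℤ)) else 0

open Finset

lemma eI_eq_stdAddChar {q : ℕ} [NeZero q] (t : ℤ) : eI q t = ZMod.stdAddChar (t : ZMod q) :=
  (ZMod.stdAddChar_coe t).symm

lemma eI_add (q : ℕ) (t s : ℤ) : eI q (t + s) = eI q t * eI q s := by
  simp only [eI, ← Complex.exp_add, Int.cast_add]
  ring_nf

lemma eI_eq_of_modEq {q : ℕ} [NeZero q] {t s : ℤ} (h : t ≡ s [ZMOD q]) : eI q t = eI q s := by
  rw [eI_eq_stdAddChar, eI_eq_stdAddChar, (ZMod.intCast_eq_intCast_iff t s q).mpr h]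

lemma eI_mul_mul {d : ℕ} (hd : d ≠ 0) (k : ℕ) (c : ℤ) : eI (d * k) (d * c) = eI k c := by
  have : (d : ℂ) ≠ 0 := Nat.cast_ne_zero.mpr hd
  simp only [eI]
  push_cast
  congr 1
  field_simp

lemma sum_range_eI_mul_eq_zero {k : ℕ} [NeZero k] {c : ℤ} (hc : (c : ZMod k) ≠ 0) :
    ∑ z ∈ range k, eI k (c * z) = 0 := by
  have hpow (z : ℕ) : eI k (c * z) = eI k c ^ z := by
    rw [eI_eq_stdAddChar, eI_eq_stdAddChar, ← AddChar.map_nsmul_eq_pow]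
    push_cast
    rw [nsmul_eq_mul, mul_comm]
  have hne : eI k c ≠ 1 := by
    rwa [eI_eq_stdAddChar, ← AddChar.map_zero_eq_one (ZMod.stdAddChar (N := k)),
      ZMod.injective_stdAddChar.ne_iff]
  simp_rw [hpow]
  rw [geom_sum_eq hne, ← hpow, eI_eq_stdAddChar]
  simp

lemma sum_range_mul_eq_sum_sum {M : Type*} [AddCommMonoid M] (f : ℕ → M) (d k : ℕ) :
    ∑ x ∈ range (d * k), f x = ∑ y ∈ range d, ∑ z ∈ range k, f (y + d * z) := by
  rw [mul_comm, sum_range, ← finProdFinEquiv.sum_comp, Fintype.sum_prod_type, sum_comm]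
  simp [sum_range]

lemma Nat.coprime_add_mul_iff_of_dvd {d k y : ℕ} (hkd : k ∣ d) (z : ℕ) :
    (y + d * z).Coprime (d * k) ↔ y.Coprime (d * k) := by
  have key (x : ℕ) : x.Coprime (d * k) ↔ x.Coprime d := by
    rw [Nat.coprime_mul_iff_right]
    exact ⟨And.left, fun h => ⟨h, h.coprime_dvd_right hkd⟩⟩
  rw [key, key, Nat.coprime_add_mul_left_left]

lemma sub_mul_sq_ne_zero_of_not_isSquare {R : Type*} [CommRing R] {a b : R}
    (h : ¬IsSquare (a * b)) (w : R) : b - a * w ^ 2 ≠ 0 := by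
  intro hb
  exact h ⟨a * w, by linear_combination a * hb⟩

lemma eI_kloosterman_phase_add_mul {d k : ℕ} (hd : d ≠ 0) (hkd : k ∣ d) (a b : ℤ) {y : ℕ}
    (hy : y.Coprime (d * k)) (z : ℕ) :
    eI (d * k) (a * (((y + d * z : ℕ) : ZMod (d * k))⁻¹.val : ℤ) + b * (y + d * z : ℕ)) =
      eI (d * k) (a * ((y : ZMod (d * k))⁻¹.val : ℤ) + b * y) *
        eI k ((b - a * ((y : ZMod (d * k))⁻¹.val : ℤ) ^ 2) * z) := by
  have : NeZero (d * k) := ⟨mul_ne_zero hd (ne_zero_of_dvd_ne_zero hd hkd)⟩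
  set Y := (y : ZMod (d * k))⁻¹
  have hyY : (y : ZMod (d * k)) * Y = 1 := ZMod.coe_mul_inv_eq_one y hy
  have hdd : (d : ZMod (d * k)) * d = 0 := by
    rw [← Nat.cast_mul, ZMod.natCast_eq_zero_iff]
    exact mul_dvd_mul_left d hkd
  -- `(d z)² = 0` modulo `d k`, so inverting `y + d z` is a first-order Taylor expansion.
  have hinv : ((y : ZMod (d * k)) + d * z)⁻¹ = Y - d * z * Y ^ 2 := by
    apply ZMod.inv_eq_of_mul_eq_one
    linear_combination (1 - (d : ZMod (d * k)) * z * Y) * hyY - (z : ZMod (d * k)) ^ 2 * Y ^ 2 * hdd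
  have hphase : a * (((y + d * z : ℕ) : ZMod (d * k))⁻¹.val : ℤ) + b * (y + d * z : ℕ) ≡
      (a * (Y.val : ℤ) + b * y) + d * ((b - a * (Y.val : ℤ) ^ 2) * z) [ZMOD (d * k : ℕ)] := by
    rw [← ZMod.intCast_eq_intCast_iff]
    push_cast
    rw [ZMod.natCast_zmod_val, ZMod.natCast_zmod_val, hinv]
    ring
  rw [eI_eq_of_modEq hphase, eI_add, eI_mul_mul hd]

theorem Kl_mul_eq_of_dvd {d k : ℕ} (hd : d ≠ 0) (hkd : k ∣ d) (a b : ℤ) :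
    Kl a b (d * k) = ∑ y ∈ range d, if y.Coprime (d * k) then
      eI (d * k) (a * ((y : ZMod (d * k))⁻¹.val : ℤ) + b * y) *
        ∑ z ∈ range k, eI k ((b - a * ((y : ZMod (d * k))⁻¹.val : ℤ) ^ 2) * z) else 0 := by
  rw [Kl, sum_range_mul_eq_sum_sum]
  refine sum_congr rfl fun y _ => ?_
  simp_rw [← Nat.coprime_iff_gcd_eq_one, Nat.coprime_add_mul_iff_of_dvd hkd]
  split_ifs with hy
  · rw [mul_sum]
    exact sum_congr rfl fun z _ => eI_kloosterman_phase_add_mul hd hkd a b hy z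
  · exact sum_const_zero

theorem stmt3_general (p : ℕ) (hp : p.Prime) (n : ℕ) (hn : 2 ≤ n)
    (a b : ℤ)
    (hns : ¬ IsSquare ((a * b : ℤ) : ZMod p)) :
    Kl a b (p ^ n) = 0 := by
  have : NeZero p := ⟨hp.ne_zero⟩
  have hpn : p ^ n = p ^ (n - 1) * p := by rw [← pow_succ]; congr 1; omega
  rw [hpn, Kl_mul_eq_of_dvd (pow_ne_zero _ hp.ne_zero) (dvd_pow_self p (by omega))]
  refine sum_eq_zero fun y _ => ?_
  split_ifs
  · rw [sum_range_eI_mul_eq_zero, mul_zero]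
    push_cast at hns ⊢
    exact sub_mul_sq_ne_zero_of_not_isSquare hns _
  · rfl

theorem stmt3 (p : ℕ) (hp : p.Prime) (hodd : p ≠ 2) (n : ℕ) (hn : 2 ≤ n)
    (a b : ℤ) (hab : Int.gcd (a * b) p = 1)
    (hns : ¬ IsSquare ((a * b : ℤ) : ZMod p)) :
    Kl a b (p ^ n) = 0 :=
  stmt3_general p hp n hn a b hns
end

section
/- Let L ≥ 1 be an integer and c ∈ (0, 2^{−2^L}] a real number. Let K > 0 be real, let Q_0, Q_1, …, Q_L be positive integers, and let d be a positive integer with d | Q_0 and K/Q_j ≥ Q_0^{2c} for all 1 ≤ j ≤ L. For h = (h_1,…,h_L) ∈ ℤ^L and I ⊆ {1,…,L} write H_I := ∑_{i∈I} h_i. Then the number of tuples h ∈ ℤ^L with 1 ≤ |h_j| ≤ K/Q_j for all j, and such that for every prime p dividing d, with v := v_p(d) the p-adic valuation of d, one has min_{I,J ⊆ {1,…,L}, H_I ≠ H_J} |H_I − H_J|_p < p^{−cv} (where |·|_p is the p-adic absolute value), is at most C · 2^L · τ(d)^{2L−1} · d^{−c} · K^L/(Q_1⋯Q_L) for some absolute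 constant C > 0, where τ(d) is the number of positive divisors of d. -/
/-!
For each prime `p ∣ d` the hypothesis yields `p ^ ⌈c v_p(d)⌉ ∣ H_I - H_J ≠ 0`. Write
`H_I - H_J = ∑_j δ_j h_j` with `δ_j ∈ {-1, 0, 1}`; if `i` is the largest index with `δ_i ≠ 0`,
then up to sign `H_I - H_J = h_i + ∑_{j<i} ε_j h_j`. There are `(3^L - 1) / 2` such monic forms;
fix one for each prime. Running through the coordinates in increasing order, `h_i` is confined
to one residue class modulo the product `q_i` of the prime powers whose form has leading index
`i`. So it takes at most `2K/(Q_i q_i) + 1 ≤ 2 · 2K/(Q_i q_i)` values when `q_i ≤ 2K/Q_i`, at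
most one value when `q_i > 2K/Q_i` (and `1 ≤ d^{-c} · 2K/Q_i` as `K/Q_i ≥ d^c`), and at most
`2K/Q_i` since `h_i ≠ 0`. As `∏ q_i ≥ d^c`, the product is at most `2^{ω(d)} d^{-c} ∏ (2K/Q_i)`.
Summing over the `((3^L - 1)/2)^{ω(d)}` choices of forms, `3^L - 1 ≤ 2^{2L-1}` and
`2^{ω(d)} ≤ τ(d)` give the bound with `C = 1`.
-/

open Finset

theorem Int.finite_setOf_abs_le (M : ℝ) : {x : ℤ | |(x : ℝ)| ≤ M}.Finite :=
  (Set.finite_Icc (-⌈M⌉) ⌈M⌉).subset fun x hx => by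
    have := abs_le.1 (hx.trans (Int.le_ceil M))
    exact ⟨by exact_mod_cast this.1, by exact_mod_cast this.2⟩

theorem Int.card_le_two_mul_floor_of_ne_zero {A : Finset ℤ} {M : ℝ}
    (hA : ∀ x ∈ A, x ≠ 0 ∧ |(x : ℝ)| ≤ M) : #A ≤ 2 * ⌊M⌋₊ := by
  have hsub : A ⊆ (Icc (-(⌊M⌋₊ : ℤ)) ⌊M⌋₊).erase 0 := by
    intro x hx
    obtain ⟨hx0, hxM⟩ := hA x hx
    have : x.natAbs ≤ ⌊M⌋₊ := Nat.le_floor (by rwa [Nat.cast_natAbs, Int.cast_abs])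
    exact mem_erase.2 ⟨hx0, mem_Icc.2 ⟨by omega, by omega⟩⟩
  calc #A ≤ #((Icc (-(⌊M⌋₊ : ℤ)) ⌊M⌋₊).erase 0) := card_le_card hsub
    _ = 2 * ⌊M⌋₊ := by
      rw [card_erase_of_mem (mem_Icc.2 ⟨by omega, by omega⟩), Int.card_Icc]
      omega

theorem Int.card_le_floor_add_one_of_dvd_sub {A : Finset ℤ} {q : ℕ} (hq : 0 < q) {M : ℝ}
    (hAq : ∀ x ∈ A, ∀ y ∈ A, (q : ℤ) ∣ x - y) (hAM : ∀ x ∈ A, |(x : ℝ)| ≤ M) :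
    #A ≤ ⌊2 * M / q⌋₊ + 1 := by
  have hq' : (0 : ℝ) < q := Nat.cast_pos.2 hq
  set φ : ℤ → ℤ := fun x => ⌊((x : ℝ) + M) / q⌋
  have hmaps : ∀ x ∈ A, φ x ∈ Icc 0 ⌊2 * M / q⌋ := by
    intro x hx
    have := abs_le.1 (hAM x hx)
    exact mem_Icc.2 ⟨Int.floor_nonneg.2 (div_nonneg (by linarith) hq'.le),
      Int.floor_mono (div_le_div_of_nonneg_right (by linarith) hq'.le)⟩
  have hinj : Set.InjOn φ A := by
    intro x hx y hy hxy
    have hlt : |((x - y : ℤ) : ℝ)| < q := by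
      have := Int.abs_sub_lt_one_of_floor_eq_floor hxy
      rwa [← sub_div, abs_div, abs_of_pos hq', div_lt_one hq', add_sub_add_right_eq_sub,
        ← Int.cast_sub] at this
    exact sub_eq_zero.1 (Int.eq_zero_of_abs_lt_dvd (hAq x hx y hy) (by exact_mod_cast hlt))
  calc #A ≤ #(Icc 0 ⌊2 * M / q⌋) := card_le_card_of_injOn φ hmaps hinj
    _ ≤ ⌊2 * M / q⌋₊ + 1 := by
      rw [Int.card_Icc, ← Int.floor_toNat]
      omega

namespace Finset

variable {ι α : Type*} [Fintype ι] [LinearOrder ι] [DecidableEq α]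

def extensionValues (T : Finset (ι → α)) (g : ι → α) (i : ι) : Finset α :=
  (T.filter fun h => ∀ j < i, h j = g j).image (· i)

theorem mem_extensionValues {T : Finset (ι → α)} {g : ι → α} {i : ι} {x : α} :
    x ∈ T.extensionValues g i ↔ ∃ h ∈ T, (∀ j < i, h j = g j) ∧ h i = x := by
  simp [extensionValues, and_assoc]

theorem extensionValues_congr (T : Finset (ι → α)) {g g' : ι → α} {i : ι}
    (hgg' : ∀ j < i, g j = g' j) : T.extensionValues g i = T.extensionValues g' i := by
  simp only [extensionValues]
  congr 1
  exact filter_congr fun h _ => forall₂_congr fun j hj => by rw [hgg' j hj]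

theorem mem_extensionValues_self {T : Finset (ι → α)} {g : ι → α} (hg : g ∈ T) (i : ι) :
    g i ∈ T.extensionValues g i :=
  mem_extensionValues.2 ⟨g, hg, fun _ _ => rfl, rfl⟩

/-- The rank of `h i` in `T.extensionValues h i` determines `h i` once `h j` is known for
`j < i`, so these ranks encode `h` injectively. -/
theorem card_le_prod_sup_card_extensionValues (T : Finset (ι → α)) :
    #T ≤ ∏ i, T.sup fun g => #(T.extensionValues g i) := by
  set Φ : (ι → α) → ι → ℕ := fun h i => (T.extensionValues h i).toList.idxOf (h i)
  have hmaps : ∀ h ∈ T,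
      Φ h ∈ Fintype.piFinset fun i => range (T.sup fun g => #(T.extensionValues g i)) := by
    intro h hh
    refine Fintype.mem_piFinset.2 fun i => mem_range.2 ?_
    calc Φ h i < #(T.extensionValues h i) := by
          rw [← length_toList]
          exact List.idxOf_lt_length_iff.2 (mem_toList.2 (mem_extensionValues_self hh i))
      _ ≤ _ := le_sup (f := fun g => #(T.extensionValues g i)) hh
  have hinj : Set.InjOn Φ T := by
    intro h hh g hg hΦ
    funext i
    induction i using WellFoundedLT.induction with
    | _ i ih =>
      have hext := T.extensionValues_congr ih
      have := congrFun hΦ i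
      simp only [Φ, hext] at this
      exact (List.idxOf_inj (mem_toList.2 (hext ▸ mem_extensionValues_self hh i))).1 this
  calc #T ≤ #(Fintype.piFinset fun i => range (T.sup fun g => #(T.extensionValues g i))) :=
        card_le_card_of_injOn Φ hmaps hinj
    _ = _ := by simp

theorem prod_le_of_le_mul_div_or_le_div {ι : Type*} (s : Finset ι) {b w t q : ι → ℝ} {D : ℝ}
    (hD : 0 < D) (hqD : D ≤ ∏ i ∈ s, q i) (ht : ∀ i ∈ s, 1 ≤ t i)
    (hb : ∀ i ∈ s, 0 ≤ b i ∧ b i ≤ w i)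
    (hbq : ∀ i ∈ s, b i ≤ t i * w i / q i ∨ b i ≤ w i / D) :
    ∏ i ∈ s, b i ≤ (∏ i ∈ s, t i) * (∏ i ∈ s, w i) / D := by
  classical
  have hw : ∀ i ∈ s, 0 ≤ w i := fun i hi => (hb i hi).1.trans (hb i hi).2
  have hwt : 0 ≤ (∏ i ∈ s, t i) * ∏ i ∈ s, w i :=
    mul_nonneg (prod_nonneg fun i hi => zero_le_one.trans (ht i hi)) (prod_nonneg hw)
  by_cases hall : ∀ i ∈ s, b i ≤ t i * w i / q i
  · calc ∏ i ∈ s, b i ≤ ∏ i ∈ s, t i * w i / q i := prod_le_prod (fun i hi => (hb i hi).1) hall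
      _ = (∏ i ∈ s, t i) * (∏ i ∈ s, w i) / ∏ i ∈ s, q i := by
        rw [prod_div_distrib, prod_mul_distrib]
      _ ≤ (∏ i ∈ s, t i) * (∏ i ∈ s, w i) / D := div_le_div_of_nonneg_left hwt hD hqD
  · push Not at hall
    obtain ⟨i, hi, hlt⟩ := hall
    have hbi : b i ≤ w i / D := (hbq i hi).resolve_left hlt.not_ge
    calc ∏ i ∈ s, b i = b i * ∏ j ∈ s.erase i, b j := (mul_prod_erase s b hi).symm
      _ ≤ w i / D * ∏ j ∈ s.erase i, w j :=
        mul_le_mul hbi (prod_le_prod (fun j hj => (hb j (mem_of_mem_erase hj)).1)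
          fun j hj => (hb j (mem_of_mem_erase hj)).2)
          (prod_nonneg fun j hj => (hb j (mem_of_mem_erase hj)).1) (div_nonneg (hw i hi) hD.le)
      _ = (∏ i ∈ s, w i) / D := by rw [← mul_prod_erase s w hi]; ring
      _ ≤ (∏ i ∈ s, t i) * (∏ i ∈ s, w i) / D := by
        gcongr
        exact le_mul_of_one_le_left (prod_nonneg hw) (one_le_prod ht)

end Finset

theorem Nat.cast_le_mul_div_or_le_div {b q : ℕ} {t M D : ℝ} (hq : 0 < q) (hD : 0 < D)
    (hDM : D ≤ 2 * M) (ht : 1 ≤ t) (ht2 : q ≠ 1 → 2 ≤ t) (hbM : b ≤ 2 * ⌊M⌋₊)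
    (hbq : b ≤ ⌊2 * M / q⌋₊ + 1) : (b : ℝ) ≤ t * (2 * M) / q ∨ (b : ℝ) ≤ 2 * M / D := by
  have hM : 0 ≤ M := by linarith
  have hq' : (0 : ℝ) < q := Nat.cast_pos.2 hq
  rcases eq_or_ne q 1 with rfl | hq1
  · left
    calc (b : ℝ) ≤ 2 * ⌊M⌋₊ := by exact_mod_cast hbM
      _ ≤ 2 * M := by gcongr; exact Nat.floor_le hM
      _ ≤ t * (2 * M) / (1 : ℕ) := by
        rw [Nat.cast_one, div_one]; exact le_mul_of_one_le_left (by linarith) ht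
  rcases le_or_gt (q : ℝ) (2 * M) with hle | hlt
  · left
    have h1 : 1 ≤ 2 * M / q := (one_le_div hq').2 hle
    calc (b : ℝ) ≤ ⌊2 * M / q⌋₊ + 1 := by exact_mod_cast hbq
      _ ≤ 2 * M / q + 2 * M / q := by gcongr; exact Nat.floor_le (by positivity)
      _ = 2 * (2 * M) / q := by ring
      _ ≤ t * (2 * M) / q := by gcongr; exact ht2 hq1
  · right
    rw [Nat.floor_eq_zero.2 ((div_lt_one hq').2 hlt), zero_add] at hbq
    calc (b : ℝ) ≤ 1 := by exact_mod_cast hbq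
      _ ≤ 2 * M / D := (one_le_div hD).2 hDM

theorem Nat.sum_range_succ_three_pow_le (n : ℕ) : ∑ i ∈ range (n + 1), 3 ^ i ≤ 4 ^ n := by
  induction n with
  | zero => simp
  | succ n ih =>
    rw [sum_range_succ, pow_succ 4]
    have : 3 ^ (n + 1) ≤ 3 * 4 ^ n := by
      rw [pow_succ']; exact Nat.mul_le_mul_left 3 (Nat.pow_le_pow_left (by norm_num) n)
    omega

theorem SignType.isUnit_coe {R : Type*} [Ring R] {s : SignType} (hs : s ≠ 0) :
    IsUnit (s : R) := by
  cases s <;> simp_all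

abbrev MonicForm (L : ℕ) := Σ i : Fin L, (↥(Iio i) → SignType)

namespace MonicForm

variable {L : ℕ}

section Eval

variable {R : Type*} [CommRing R]

def eval (f : MonicForm L) (h : Fin L → R) : R :=
  h f.1 + ∑ j, (f.2 j : R) * h j

theorem eval_sub_eval (f : MonicForm L) {h h' : Fin L → R} (hh' : ∀ j < f.1, h j = h' j) :
    f.eval h - f.eval h' = h f.1 - h' f.1 := by
  have : ∑ j, (f.2 j : R) * h j = ∑ j, (f.2 j : R) * h' j :=
    sum_congr rfl fun j _ => by rw [hh' j (mem_Iio.1 j.2)]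
  rw [eval, eval, this]
  ring

/-- Normalise by the sign of the last nonzero coefficient. -/
theorem exists_isUnit_mul_eval_eq {δ : Fin L → SignType} (hδ : δ ≠ 0) :
    ∃ f : MonicForm L, ∃ u : R, IsUnit u ∧
      ∀ h : Fin L → R, ∑ j, (δ j : R) * h j = u * f.eval h := by
  have hne : (univ.filter fun j => δ j ≠ 0).Nonempty := by
    obtain ⟨j, hj⟩ := Function.ne_iff.1 hδ
    exact ⟨j, mem_filter.2 ⟨mem_univ _, hj⟩⟩
  set i := (univ.filter fun j => δ j ≠ 0).max' hne
  have hi : δ i ≠ 0 := (mem_filter.1 (max'_mem _ hne)).2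
  have hgt : ∀ j, i < j → δ j = 0 := fun j hj => by
    by_contra h
    exact not_le.2 hj (le_max' _ j (mem_filter.2 ⟨mem_univ _, h⟩))
  refine ⟨⟨i, fun j => δ i * δ j⟩, δ i, SignType.isUnit_coe hi, fun h => ?_⟩
  have hsq : (δ i : R) * δ i = 1 := by cases h : δ i <;> simp_all
  have hsplit : ∑ j, (δ j : R) * h j = δ i * h i + ∑ j ∈ Iio i, (δ j : R) * h j := by
    rw [← sum_subset (subset_univ (Iic i)) fun j _ hj => by
        rw [hgt j (not_le.1 (mt mem_Iic.2 hj)), SignType.coe_zero, zero_mul],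
      Iic_eq_cons_Iio, sum_cons]
  rw [hsplit, eval, mul_add, ← sum_coe_sort (Iio i), mul_sum]
  congr 1
  refine sum_congr rfl fun j _ => ?_
  rw [SignType.coe_mul]
  linear_combination (-(δ j : R) * h j) * hsq

theorem exists_dvd_eval_of_dvd_sum_sub_sum {h : Fin L → R} {I J : Finset (Fin L)}
    (hIJ : ∑ i ∈ I, h i ≠ ∑ i ∈ J, h i) {n : R} (hn : n ∣ ∑ i ∈ I, h i - ∑ i ∈ J, h i) :
    ∃ f : MonicForm L, n ∣ f.eval h := by
  classical
  set δ : Fin L → SignType := fun j => if j ∈ I \ J then 1 else if j ∈ J \ I then -1 else 0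
  have hδ : ∑ i ∈ I, h i - ∑ i ∈ J, h i = ∑ j, (δ j : R) * h j := by
    have hpt : ∀ j, (δ j : R) * h j =
        (if j ∈ I then h j else 0) - (if j ∈ J then h j else 0) := by
      intro j
      by_cases hI : j ∈ I <;> by_cases hJ : j ∈ J <;> simp [δ, hI, hJ]
    simp only [hpt, sum_sub_distrib, sum_ite_mem, univ_inter]
  have hδ0 : δ ≠ 0 := by
    intro h0
    simp [h0, sub_eq_zero, hIJ] at hδ
  obtain ⟨f, u, hu, hf⟩ := exists_isUnit_mul_eval_eq (R := R) hδ0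
  exact ⟨f, by rwa [hδ, hf, hu.dvd_mul_left] at hn⟩

end Eval

theorem card_eq : Fintype.card (MonicForm L) = ∑ i ∈ range L, 3 ^ i := by
  simp only [Fintype.card_sigma, Fintype.card_fun, Fintype.card_coe, Fin.card_Iio]
  exact Fin.sum_univ_eq_sum_range (3 ^ ·) L

theorem two_mul_card_le (hL : 1 ≤ L) : 2 * Fintype.card (MonicForm L) ≤ 2 ^ (2 * L - 1) := by
  obtain ⟨n, rfl⟩ : ∃ n, L = n + 1 := ⟨L - 1, by omega⟩
  rw [card_eq, show 2 * (n + 1) - 1 = 2 * n + 1 by omega, pow_succ, pow_mul, mul_comm]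
  exact Nat.mul_le_mul_right 2 (Nat.sum_range_succ_three_pow_le n)

variable {P : Type*} [Fintype P]

def leadModulus (σ : P → MonicForm L) (r : P → ℕ) (i : Fin L) : ℕ :=
  ∏ p ∈ univ.filter (fun p => (σ p).1 = i), r p

theorem prod_leadModulus (σ : P → MonicForm L) (r : P → ℕ) :
    ∏ i, leadModulus σ r i = ∏ p, r p :=
  prod_fiberwise univ (fun p => (σ p).1) r

theorem leadModulus_dvd_sub {r : P → ℕ} (hr : Pairwise fun p p' => (r p).Coprime (r p'))
    {σ : P → MonicForm L} {T : Finset (Fin L → ℤ)} (hT : ∀ h ∈ T, ∀ p, (r p : ℤ) ∣ (σ p).eval h)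
    {g : Fin L → ℤ} {i : Fin L} {x y : ℤ} (hx : x ∈ T.extensionValues g i)
    (hy : y ∈ T.extensionValues g i) : (leadModulus σ r i : ℤ) ∣ x - y := by
  obtain ⟨h, hT_h, hhg, rfl⟩ := mem_extensionValues.1 hx
  obtain ⟨h', hT_h', hh'g, rfl⟩ := mem_extensionValues.1 hy
  rw [leadModulus, Nat.cast_prod]
  refine prod_dvd_of_coprime (fun p _ p' _ hpp' => Nat.isCoprime_iff_coprime.2 (hr hpp'))
    fun p hp => ?_
  obtain rfl := (mem_filter.1 hp).2
  rw [← (σ p).eval_sub_eval fun j hj => (hhg j hj).trans (hh'g j hj).symm]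
  exact dvd_sub (hT h hT_h p) (hT h' hT_h' p)

theorem card_le_of_forall_dvd_eval {r : P → ℕ} (hr0 : ∀ p, 0 < r p)
    (hr : Pairwise fun p p' => (r p).Coprime (r p')) (σ : P → MonicForm L) {M : Fin L → ℝ}
    {D : ℝ} (hD : 0 < D) (hDr : D ≤ ∏ p, (r p : ℝ)) (hDM : ∀ i, D ≤ 2 * M i)
    {T : Finset (Fin L → ℤ)} (hT : ∀ h ∈ T, ∀ i, h i ≠ 0 ∧ |(h i : ℝ)| ≤ M i)
    (hTσ : ∀ h ∈ T, ∀ p, (r p : ℤ) ∣ (σ p).eval h) :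
    (#T : ℝ) ≤ 2 ^ Fintype.card P * (∏ i, 2 * M i) / D := by
  set fib : Fin L → Finset P := fun i => univ.filter fun p => (σ p).1 = i
  set q := leadModulus σ r
  set b : Fin L → ℕ := fun i => T.sup fun g => #(T.extensionValues g i)
  have hvals : ∀ g i, ∀ x ∈ T.extensionValues g i, x ≠ 0 ∧ |(x : ℝ)| ≤ M i := by
    intro g i x hx
    obtain ⟨h, hh, -, rfl⟩ := mem_extensionValues.1 hx
    exact hT h hh i
  have hq : ∀ i, 0 < q i := fun i => prod_pos fun p _ => hr0 p
  have hfib : ∀ i, q i ≠ 1 → 2 ≤ (2 : ℝ) ^ #(fib i) := by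
    intro i hq1
    obtain ⟨p, hp⟩ : (fib i).Nonempty := nonempty_iff_ne_empty.2 fun h0 => hq1 <| by
      simp only [q, leadModulus, fib] at h0 ⊢
      rw [h0, prod_empty]
    exact le_self_pow₀ one_le_two (card_ne_zero_of_mem hp)
  have hbM : ∀ i, b i ≤ 2 * ⌊M i⌋₊ := fun i =>
    Finset.sup_le fun g _ => Int.card_le_two_mul_floor_of_ne_zero (hvals g i)
  have hbq : ∀ i, b i ≤ ⌊2 * M i / q i⌋₊ + 1 := fun i =>
    Finset.sup_le fun g _ => Int.card_le_floor_add_one_of_dvd_sub (hq i)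
      (fun _ hx _ hy => leadModulus_dvd_sub hr hTσ hx hy) fun x hx => (hvals g i x hx).2
  calc (#T : ℝ) ≤ ∏ i, (b i : ℝ) := by exact_mod_cast card_le_prod_sup_card_extensionValues T
    _ ≤ (∏ i, (2 : ℝ) ^ #(fib i)) * (∏ i, 2 * M i) / D := by
      refine prod_le_of_le_mul_div_or_le_div univ hD ?_ (fun i _ => one_le_pow₀ one_le_two)
        (fun i _ => ⟨Nat.cast_nonneg _, ?_⟩) fun i _ => Nat.cast_le_mul_div_or_le_div (hq i) hD
          (hDM i) (one_le_pow₀ one_le_two) (hfib i) (hbM i) (hbq i)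
      · rw [← Nat.cast_prod, prod_leadModulus σ r, Nat.cast_prod]
        exact hDr
      · calc (b i : ℝ) ≤ 2 * ⌊M i⌋₊ := by exact_mod_cast hbM i
          _ ≤ 2 * M i := by gcongr; exact Nat.floor_le (by linarith [hDM i])
    _ = 2 ^ Fintype.card P * (∏ i, 2 * M i) / D := by
      rw [prod_pow_eq_pow_sum, ← card_eq_sum_card_fiberwise fun p _ => mem_univ _, card_univ]

theorem ncard_le_of_forall_exists_dvd_eval {r : P → ℕ} (hr0 : ∀ p, 0 < r p)
    (hr : Pairwise fun p p' => (r p).Coprime (r p')) {M : Fin L → ℝ} {D : ℝ} (hD : 0 < D)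
    (hDr : D ≤ ∏ p, (r p : ℝ)) (hDM : ∀ i, D ≤ 2 * M i) {S : Set (Fin L → ℤ)}
    (hS : ∀ h ∈ S, (∀ i, h i ≠ 0 ∧ |(h i : ℝ)| ≤ M i) ∧
      ∀ p, ∃ f : MonicForm L, (r p : ℤ) ∣ f.eval h) :
    (S.ncard : ℝ) ≤
      (2 * Fintype.card (MonicForm L)) ^ Fintype.card P * (∏ i, 2 * M i) / D := by
  classical
  have hfin : S.Finite := (Set.Finite.pi' fun i => Int.finite_setOf_abs_le (M i)).subset
    fun h hh i => ((hS h hh).1 i).2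
  set T := hfin.toFinset
  have hT : ∀ h ∈ T, h ∈ S := fun h hh => hfin.mem_toFinset.1 hh
  set Tσ : (P → MonicForm L) → Finset (Fin L → ℤ) := fun σ =>
    T.filter fun h => ∀ p, (r p : ℤ) ∣ (σ p).eval h
  have hcover : T ⊆ univ.biUnion Tσ := by
    intro h hh
    choose σ hσ using (hS h (hT h hh)).2
    exact mem_biUnion.2 ⟨σ, mem_univ _, mem_filter.2 ⟨hh, hσ⟩⟩
  rw [Set.ncard_eq_toFinset_card S hfin]
  calc (#T : ℝ) ≤ ∑ σ, (#(Tσ σ) : ℝ) := by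
        exact_mod_cast (card_le_card hcover).trans card_biUnion_le
    _ ≤ ∑ _σ : P → MonicForm L, 2 ^ Fintype.card P * (∏ i, 2 * M i) / D :=
        sum_le_sum fun σ _ => card_le_of_forall_dvd_eval hr0 hr σ hD hDr hDM
          (fun h hh => (hS h (hT h (mem_filter.1 hh).1)).1) fun h hh => (mem_filter.1 hh).2
    _ = _ := by
        rw [sum_const, card_univ, Fintype.card_fun, nsmul_eq_mul]
        push_cast
        ring

end MonicForm

theorem pow_ceil_dvd_of_padicNorm_lt {p : ℕ} [Fact p.Prime] {z : ℤ} (hz : z ≠ 0) {x : ℝ}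
    (hlt : (padicNorm p z : ℝ) < (p : ℝ) ^ (-x)) : (p : ℤ) ^ ⌈x⌉₊ ∣ z := by
  have hp1 : (1 : ℝ) < p := Nat.one_lt_cast.2 (Fact.out : p.Prime).one_lt
  have hnorm : (padicNorm p z : ℝ) = (p : ℝ) ^ (-(padicValInt p z : ℝ)) := by
    rw [padicNorm.eq_zpow_of_nonzero (Int.cast_ne_zero.2 hz), padicValRat.of_int, Rat.cast_zpow,
      Rat.cast_natCast, ← Real.rpow_intCast]
    push_cast
    rfl
  rw [hnorm, Real.rpow_lt_rpow_left_iff hp1, neg_lt_neg_iff] at hlt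
  exact (pow_dvd_pow _ (Nat.ceil_le.2 hlt.le)).trans (padicValInt_dvd z)

theorem Nat.rpow_le_prod_primeFactors_pow_ceil {d : ℕ} (hd : d ≠ 0) (c : ℝ) :
    (d : ℝ) ^ c ≤ ∏ p : d.primeFactors, ((p.1 ^ ⌈c * d.factorization p⌉₊ : ℕ) : ℝ) := by
  rw [prod_coe_sort d.primeFactors fun p => ((p ^ ⌈c * d.factorization p⌉₊ : ℕ) : ℝ)]
  have hd' : (d : ℝ) = ∏ p ∈ d.primeFactors, (p : ℝ) ^ d.factorization p := by
    exact_mod_cast (Nat.prod_factorization_pow_eq_self hd).symm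
  rw [hd', ← Real.finsetProd_rpow _ _ fun p _ => by positivity]
  refine prod_le_prod (fun p _ => by positivity) fun p hp => ?_
  have hp1 : (1 : ℝ) ≤ p := Nat.one_le_cast.2 (Nat.prime_of_mem_primeFactors hp).one_le
  rw [← Real.rpow_natCast, ← Real.rpow_mul (by linarith), Nat.cast_pow, ← Real.rpow_natCast]
  exact Real.rpow_le_rpow_of_exponent_le hp1 (by rw [mul_comm]; exact Nat.le_ceil _)

theorem Nat.two_pow_card_primeFactors_le_card_divisors {d : ℕ} (hd : d ≠ 0) :
    2 ^ #d.primeFactors ≤ #d.divisors := by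
  rw [Nat.card_divisors hd, ← prod_const]
  exact prod_le_prod' fun p hp =>
    Nat.succ_le_succ ((Nat.prime_of_mem_primeFactors hp).factorization_pos_of_dvd hd
      (Nat.dvd_of_mem_primeFactors hp))

theorem Nat.pairwise_coprime_pow_primeFactors (d : ℕ) (e : ℕ → ℕ) :
    Pairwise fun p p' : d.primeFactors => (p.1 ^ e p).Coprime (p'.1 ^ e p') :=
  fun p p' hpp' => Nat.Coprime.pow _ _ ((Nat.coprime_primes (Nat.prime_of_mem_primeFactors p.2)
    (Nat.prime_of_mem_primeFactors p'.2)).2 (Subtype.coe_ne_coe.2 hpp'))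

theorem MonicForm.two_mul_card_pow_le {L d : ℕ} (hL : 1 ≤ L) (hd : d ≠ 0) :
    (2 * Fintype.card (MonicForm L)) ^ #d.primeFactors ≤ #d.divisors ^ (2 * L - 1) :=
  calc (2 * Fintype.card (MonicForm L)) ^ #d.primeFactors
      ≤ (2 ^ (2 * L - 1)) ^ #d.primeFactors := Nat.pow_le_pow_left (two_mul_card_le hL) _
    _ = (2 ^ #d.primeFactors) ^ (2 * L - 1) := by rw [← pow_mul, ← pow_mul, mul_comm]
    _ ≤ #d.divisors ^ (2 * L - 1) :=
        Nat.pow_le_pow_left (Nat.two_pow_card_primeFactors_le_card_divisors hd) _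

theorem stmt8 :
    ∃ C : ℝ, 0 < C ∧
      ∀ L : ℕ, 1 ≤ L → ∀ c : ℝ, 0 < c → c ≤ ((2 : ℝ) ^ (2 ^ L))⁻¹ →
      ∀ K : ℝ, 0 < K → ∀ Q₀ : ℕ, 0 < Q₀ → ∀ Q : Fin L → ℕ, (∀ j, 0 < Q j) →
      ∀ d : ℕ, 0 < d → d ∣ Q₀ → (∀ j, (Q₀ : ℝ) ^ (2 * c) ≤ K / (Q j : ℝ)) →
        ({h : Fin L → ℤ |
            (∀ j, 1 ≤ |h j| ∧ (|h j| : ℝ) ≤ K / (Q j : ℝ)) ∧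
            ∀ p : ℕ, p.Prime → p ∣ d →
              ∃ I J : Finset (Fin L), (∑ i ∈ I, h i) ≠ (∑ i ∈ J, h i) ∧
                ((padicNorm p (((∑ i ∈ I, h i) - ∑ i ∈ J, h i : ℤ) : ℚ) : ℚ) : ℝ) <
                  (p : ℝ) ^ (-(c * (d.factorization p : ℝ)))}.ncard : ℝ) ≤
          C * 2 ^ L * (d.divisors.card : ℝ) ^ (2 * L - 1) * (d : ℝ) ^ (-c) * K ^ L /
            ∏ j, (Q j : ℝ) := by
  refine ⟨1, one_pos, fun L hL c hc _ K hK Q₀ hQ₀ Q _ d hd hdQ₀ hKQ => ?_⟩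
  set e : ℕ → ℕ := fun p => ⌈c * (d.factorization p : ℝ)⌉₊
  have hprime : ∀ p : d.primeFactors, p.1.Prime := fun p => Nat.prime_of_mem_primeFactors p.2
  have hDM : ∀ j, (d : ℝ) ^ c ≤ 2 * (K / Q j) := fun j =>
    calc (d : ℝ) ^ c ≤ (d : ℝ) ^ (2 * c) :=
          Real.rpow_le_rpow_of_exponent_le (Nat.one_le_cast.2 hd) (by linarith)
      _ ≤ (Q₀ : ℝ) ^ (2 * c) :=
          Real.rpow_le_rpow (by positivity) (Nat.cast_le.2 (Nat.le_of_dvd hQ₀ hdQ₀)) (by linarith)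
      _ ≤ 2 * (K / Q j) := (hKQ j).trans (le_mul_of_one_le_left (by positivity) one_le_two)
  refine (MonicForm.ncard_le_of_forall_exists_dvd_eval (r := fun p : d.primeFactors => p.1 ^ e p)
    (fun p => pow_pos (hprime p).pos _) (Nat.pairwise_coprime_pow_primeFactors d e)
    (by positivity) (Nat.rpow_le_prod_primeFactors_pow_ceil hd.ne' c) hDM ?_).trans ?_
  · rintro h ⟨hbox, hpadic⟩
    refine ⟨fun j => ⟨abs_pos.1 (hbox j).1, (hbox j).2⟩, fun p => ?_⟩
    obtain ⟨I, J, hIJ, hlt⟩ := hpadic p (hprime p) (Nat.dvd_of_mem_primeFactors p.2)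
    have := Fact.mk (hprime p)
    push_cast
    exact MonicForm.exists_dvd_eval_of_dvd_sum_sub_sum hIJ
      (pow_ceil_dvd_of_padicNorm_lt (sub_ne_zero.2 hIJ) hlt)
  · calc _ ≤ (#d.divisors : ℝ) ^ (2 * L - 1) * (∏ j, 2 * (K / Q j)) / (d : ℝ) ^ c := by
          rw [Fintype.card_coe]
          gcongr
          exact_mod_cast MonicForm.two_mul_card_pow_le hL hd.ne'
      _ = _ := by
          rw [Real.rpow_neg (by positivity), prod_mul_distrib, prod_div_distrib, prod_const,
            prod_const, card_univ, Fintype.card_fin]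
          ring
end

section
/- Let p be an odd prime, let L ≥ 1 and v ≥ 1 be integers, and let h = (h_1, …, h_L) ∈ ℤ^L. For I ⊆ {1,…,L} set H_I := ∑_{i∈I} h_i, and for τ ∈ ℤ/p^vℤ set μ(τ) := #{I ⊆ {1,…,L} : H_I ≡ τ (mod p^v)}. If μ(τ) is even for every τ ∈ ℤ/p^vℤ, then there exists some 1 ≤ i ≤ L with p | h_i. -/
/-!
Let `n = p ^ v` and let `ψ` be a primitive additive character of `ZMod n` with values in a field
of characteristic `2` (it exists because `n` is odd). Expanding the product gives
`∏ i, (1 + ψ hᵢ) = ∑_I ψ (H_I) = ∑_τ μ(τ) ψ(τ)`, which vanishes because every `μ(τ)` is even.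
In characteristic `2`, however, `1 + ψ a = 0` forces `ψ a = 1`, i.e. `a = 0`, so some `hᵢ` is
divisible by `p ^ v`.
-/

open Finset

namespace AddChar

lemma map_sum_eq_prod {ι A M : Type*} [AddCommMonoid A] [CommMonoid M] (ψ : AddChar A M)
    (s : Finset ι) (a : ι → A) : ψ (∑ i ∈ s, a i) = ∏ i ∈ s, ψ (a i) := by
  have := map_prod ψ.toMonoidHom (fun i => Multiplicative.ofAdd (a i)) s
  rwa [← ofAdd_sum] at this

lemma prod_one_add_eq_sum_powerset {ι A R : Type*} [AddCommMonoid A] [CommSemiring R]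
    (ψ : AddChar A R) (s : Finset ι) (a : ι → A) :
    ∏ i ∈ s, (1 + ψ (a i)) = ∑ I ∈ s.powerset, ψ (∑ i ∈ I, a i) := by
  simp only [prod_one_add, map_sum_eq_prod]

lemma one_add_ne_zero_of_isPrimitive {R : Type*} [CommRing R] [CharP R 2] {n : ℕ} [NeZero n]
    {ψ : AddChar (ZMod n) R} (hψ : ψ.IsPrimitive) {a : ZMod n} (ha : a ≠ 0) :
    1 + ψ a ≠ 0 := by
  rwa [Ne, CharTwo.add_eq_zero, eq_comm, hψ.zmod_char_eq_one_iff]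

lemma exists_isPrimitive_zmod (K : Type*) [CommRing K] [IsDomain K] (n : ℕ) [NeZero n]
    [HasEnoughRootsOfUnity K n] : ∃ ψ : AddChar (ZMod n) K, ψ.IsPrimitive :=
  have ⟨_, hζ⟩ := HasEnoughRootsOfUnity.exists_primitiveRoot K n
  ⟨_, zmodChar_primitive_of_primitive_root n hζ⟩

end AddChar

lemma CharTwo.sum_comp_eq_zero_of_even_card_fiber {ι κ R : Type*} [Semiring R] [CharP R 2]
    [DecidableEq κ] (s : Finset ι) (f : κ → R) (g : ι → κ)
    (heven : ∀ b, Even #{a ∈ s | g a = b}) :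
    ∑ a ∈ s, f (g a) = 0 := by
  rw [sum_comp]
  refine sum_eq_zero fun b _ => ?_
  rw [nsmul_eq_mul, CharTwo.natCast_eq_ite, if_pos (heven b), zero_mul]

theorem stmt10_general (p : ℕ) (hp : p.Prime) (hodd : p ≠ 2) (L v : ℕ) (hv : 1 ≤ v)
    (h : Fin L → ℤ)
    (hμ : ∀ τ : ZMod (p ^ v),
      Even (((Finset.univ : Finset (Fin L)).powerset.filter
        (fun I => ((∑ i ∈ I, h i : ℤ) : ZMod (p ^ v)) = τ)).card)) :
    ∃ i : Fin L, (p : ℤ) ∣ h i := by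
  by_contra! hndvd
  set K := AlgebraicClosure (ZMod 2)
  have hn : Odd (p ^ v) := (hp.odd_of_ne_two hodd).pow
  have : NeZero ((p ^ v : ℕ) : ZMod 2) := ⟨ZMod.natCast_ne_zero_iff_odd.mpr hn⟩
  have : NeZero (p ^ v) := ⟨hn.pos.ne'⟩
  obtain ⟨ψ, hψ⟩ := AddChar.exists_isPrimitive_zmod K (p ^ v)
  have hne : ∀ i, ((h i : ℤ) : ZMod (p ^ v)) ≠ 0 := fun i hi =>
    hndvd i <| (Int.natCast_dvd_natCast.mpr (dvd_pow_self p (by omega))).trans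
      ((ZMod.intCast_zmod_eq_zero_iff_dvd _ _).mp hi)
  have hprod : ∏ i, (1 + ψ (h i)) ≠ 0 :=
    prod_ne_zero_iff.mpr fun i _ => AddChar.one_add_ne_zero_of_isPrimitive hψ (hne i)
  refine hprod ?_
  rw [AddChar.prod_one_add_eq_sum_powerset]
  simp_rw [← Int.cast_sum]
  exact CharTwo.sum_comp_eq_zero_of_even_card_fiber _ ψ _ hμ

theorem stmt10 (p : ℕ) (hp : p.Prime) (hodd : p ≠ 2) (L v : ℕ) (hL : 1 ≤ L) (hv : 1 ≤ v)
    (h : Fin L → ℤ)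
    (hμ : ∀ τ : ZMod (p ^ v),
      Even (((Finset.univ : Finset (Fin L)).powerset.filter
        (fun I => ((∑ i ∈ I, h i : ℤ) : ZMod (p ^ v)) = τ)).card)) :
    ∃ i : Fin L, (p : ℤ) ∣ h i :=
  stmt10_general p hp hodd L v hv h hμ
end
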